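/- arXiv:2211.05925 — 7 statements merged into one kernel-verified Lean document; each statement's English description precedes it below -/
import Mathlib

section
/- Let A = [[2,1],[1,1]] and define φ(n) = ⟨a(n), |n|⟩ − ⟨a(An), |An|⟩ for n ∈ ℤ², where a(n) = α if n₁·n₂ ≥ 0 and a(n) = γ otherwise, with α ∈ ℝ²_{>0} and γ ∈ ℝ²_{<0}, and |n| = (|n₁|, |n₂|). Then there exists c > 0 such that φ(n) ≤ −c(|n₁| + |n₂|) for all n ∈ ℤ². -/
/-- Hilbert-Schmidt estimate for the cat map with quadrant-wise
exponential weight. `A n = (2n₁+n₂, n₁+n₂)`, `a(n) = α` if `n₁n₂ ≥ 0`, else `γ`. -/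
theorem stmt0 (α₁ α₂ γ₁ γ₂ : ℝ) (hα₁ : 0 < α₁) (hα₂ : 0 < α₂)
    (hγ₁ : γ₁ < 0) (hγ₂ : γ₂ < 0) :
    ∃ c : ℝ, 0 < c ∧ ∀ n : ℤ × ℤ,
      ((if 0 ≤ n.1 * n.2 then α₁ else γ₁) * |(n.1 : ℝ)| +
        (if 0 ≤ n.1 * n.2 then α₂ else γ₂) * |(n.2 : ℝ)|)
      - ((if 0 ≤ (2 * n.1 + n.2) * (n.1 + n.2) then α₁ else γ₁) * |((2 * n.1 + n.2 : ℤ) : ℝ)| +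
          (if 0 ≤ (2 * n.1 + n.2) * (n.1 + n.2) then α₂ else γ₂) * |((n.1 + n.2 : ℤ) : ℝ)|)
      ≤ -c * (|(n.1 : ℝ)| + |(n.2 : ℝ)|) := by
  have hcpos : 0 < min α₁ (min (-γ₁) (-γ₂ / 2)) :=
    lt_min hα₁ (lt_min (by linarith) (by linarith))
  refine ⟨min α₁ (min (-γ₁) (-γ₂ / 2)), hcpos, ?_⟩
  rintro ⟨x, y⟩
  set c : ℝ := min α₁ (min (-γ₁) (-γ₂ / 2)) with hc
  have hc1 : c ≤ α₁ := min_le_left _ _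
  have hc2 : c ≤ -γ₁ := le_trans (min_le_right _ _) (min_le_left _ _)
  have hc3 : c ≤ -γ₂ / 2 := le_trans (min_le_right _ _) (min_le_right _ _)
  simp only
  split_ifs with hP hQ hQ
  · -- xy ≥ 0 and (2x+y)(x+y) ≥ 0
    rcases mul_nonneg_iff.mp hP with ⟨hx, hy⟩ | ⟨hx, hy⟩
    · have hx' : (0:ℝ) ≤ (x:ℝ) := by exact_mod_cast hx
      have hy' : (0:ℝ) ≤ (y:ℝ) := by exact_mod_cast hy
      push_cast
      rw [abs_of_nonneg hx', abs_of_nonneg hy', abs_of_nonneg (by linarith),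
        abs_of_nonneg (by linarith)]
      nlinarith [mul_nonneg (sub_nonneg.mpr hc1) hx', mul_nonneg (sub_nonneg.mpr hc1) hy',
        mul_nonneg hα₂.le hx']
    · have hx' : (x:ℝ) ≤ 0 := by exact_mod_cast hx
      have hy' : (y:ℝ) ≤ 0 := by exact_mod_cast hy
      push_cast
      rw [abs_of_nonpos hx', abs_of_nonpos hy', abs_of_nonpos (by linarith),
        abs_of_nonpos (by linarith)]
      nlinarith [mul_nonneg (sub_nonneg.mpr hc1) (neg_nonneg.mpr hx'),
        mul_nonneg (sub_nonneg.mpr hc1) (neg_nonneg.mpr hy'),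
        mul_nonneg hα₂.le (neg_nonneg.mpr hx')]
  · -- xy ≥ 0 but (2x+y)(x+y) < 0 : impossible
    exfalso
    apply hQ
    rcases mul_nonneg_iff.mp hP with ⟨hx, hy⟩ | ⟨hx, hy⟩ <;> nlinarith
  · -- xy < 0, (2x+y)(x+y) ≥ 0
    have h1 : γ₁ * |(x:ℝ)| ≤ -c * |(x:ℝ)| := by
      nlinarith [abs_nonneg (x:ℝ), mul_le_mul_of_nonneg_right hc2 (abs_nonneg (x:ℝ))]
    have h2 : γ₂ * |(y:ℝ)| ≤ -c * |(y:ℝ)| := by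
      nlinarith [abs_nonneg (y:ℝ), mul_le_mul_of_nonneg_right hc3 (abs_nonneg (y:ℝ)), hγ₂]
    have h3 : (0:ℝ) ≤ α₁ * |((2 * x + y : ℤ) : ℝ)| := by positivity
    have h4 : (0:ℝ) ≤ α₂ * |((x + y : ℤ) : ℝ)| := by positivity
    linarith
  · -- xy < 0, (2x+y)(x+y) < 0
    push_neg at hP hQ
    push_cast
    rcases lt_or_ge 0 x with hx | hx
    · -- x > 0, y < 0, then x+y < 0 < 2x+y
      have hy : y < 0 := by nlinarith
      have hxy : x + y < 0 := by nlinarith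
      have h2xy : 0 < 2 * x + y := by nlinarith
      have hx' : (0:ℝ) < (x:ℝ) := by exact_mod_cast hx
      have hy' : (y:ℝ) < 0 := by exact_mod_cast hy
      have hxy' : (x:ℝ) + (y:ℝ) < 0 := by exact_mod_cast hxy
      have h2xy' : (0:ℝ) < 2 * (x:ℝ) + (y:ℝ) := by exact_mod_cast h2xy
      rw [abs_of_pos hx', abs_of_neg hy', abs_of_pos h2xy', abs_of_neg hxy']
      nlinarith [mul_nonneg (by linarith : (0:ℝ) ≤ -γ₂ - 2 * c) hx'.le,
        mul_nonneg (by linarith : (0:ℝ) ≤ -γ₁ - c)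
          (by linarith : (0:ℝ) ≤ -((x:ℝ) + (y:ℝ)))]
    · -- x ≤ 0; since xy < 0, x < 0, y > 0, then 2x+y < 0 < x+y
      have hx0 : x < 0 := by
        rcases hx.lt_or_eq with h | h
        · exact h
        · exfalso; rw [h] at hP; simp at hP
      have hy : 0 < y := by nlinarith
      have hxy : 0 < x + y := by nlinarith
      have h2xy : 2 * x + y < 0 := by nlinarith
      have hx' : (x:ℝ) < 0 := by exact_mod_cast hx0
      have hy' : (0:ℝ) < (y:ℝ) := by exact_mod_cast hy
      have hxy' : (0:ℝ) < (x:ℝ) + (y:ℝ) := by exact_mod_cast hxy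
      have h2xy' : 2 * (x:ℝ) + (y:ℝ) < 0 := by exact_mod_cast h2xy
      rw [abs_of_neg hx', abs_of_pos hy', abs_of_neg h2xy', abs_of_pos hxy']
      nlinarith [mul_nonneg (by linarith : (0:ℝ) ≤ -γ₂ - 2 * c)
          (by linarith : (0:ℝ) ≤ -(x:ℝ)),
        mul_nonneg (by linarith : (0:ℝ) ≤ -γ₁ - c) hxy'.le]
end

section
/- For every invertible real 2×2 matrix P there exist A ∈ GL₂(ℤ) and an invertible real 2×2 matrix P̃ with all entries non-negative such that P = A·P̃. -/
/-!
The rows of `B * P` are integer combinations of the rows of `P`. The row vectors `x` with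
`x ᵥ* P` strictly positive form a nonempty open cone, which therefore contains a primitive
integer vector `m`. Complete `m` to a matrix `B ∈ SL₂(ℤ)` with bottom row `m`, then add a
large multiple of `m` to the top row, so that both rows of `B * P` are non-negative.
Take `A = B⁻¹` and `P̃ = B * P`.
-/

open Matrix Filter ModularGroup
open scoped MatrixGroups

theorem exists_intCast_mem_of_isOpen_of_smul_mem {ι : Type*} [Fintype ι] {U : Set (ι → ℝ)}
    (hU : IsOpen U) (hne : U.Nonempty) (hsmul : ∀ t : ℝ, 0 < t → ∀ x ∈ U, t • x ∈ U) :
    ∃ n : ι → ℤ, (fun i ↦ (n i : ℝ)) ∈ U := by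
  obtain ⟨x, hx⟩ := hne
  obtain ⟨ε, hε, hball⟩ := Metric.isOpen_iff.mp hU x hx
  set n : ι → ℤ := fun i ↦ round (ε⁻¹ * x i)
  have hclose : dist (ε • fun i ↦ (n i : ℝ)) x < ε := by
    refine (dist_pi_lt_iff hε).2 fun i ↦ ?_
    have hround := abs_sub_round (ε⁻¹ * x i)
    calc dist (ε * n i) (x i) = ε * |ε⁻¹ * x i - n i| := by
          rw [Real.dist_eq, ← abs_of_pos hε, ← abs_mul, abs_sub_comm, abs_of_pos hε]
          congr 1
          field_simp
      _ ≤ ε * (1 / 2) := by gcongr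
      _ < ε := by linarith
  refine ⟨n, ?_⟩
  simpa [smul_smul, hε.ne'] using hsmul ε⁻¹ (inv_pos.2 hε) _ (hball hclose)

theorem exists_isCoprime_nsmul_eq {v : Fin 2 → ℤ} (hv : v ≠ 0) :
    ∃ g : ℕ, 0 < g ∧ ∃ w : Fin 2 → ℤ, IsCoprime (w 0) (w 1) ∧ v = g • w := by
  have hgcd : 0 < Int.gcd (v 0) (v 1) := by
    refine Int.gcd_pos_iff.2 (not_and_or.1 fun h ↦ hv ?_)
    ext i
    fin_cases i <;> simp [h.1, h.2]
  obtain ⟨g, a, b, hg, hab, ha, hb⟩ := Int.exists_gcd_one' hgcd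
  refine ⟨g, hg, ![a, b], Int.isCoprime_iff_gcd_eq_one.2 hab, ?_⟩
  ext i
  fin_cases i <;> simp [ha, hb, mul_comm]

theorem exists_isCoprime_vecMul_pos (P : Matrix (Fin 2) (Fin 2) ℝ) (hP : IsUnit P.det) :
    ∃ m : Fin 2 → ℤ, IsCoprime (m 0) (m 1) ∧ ∀ j, 0 < ((fun i ↦ (m i : ℝ)) ᵥ* P) j := by
  set U : Set (Fin 2 → ℝ) := {x | ∀ j, 0 < (x ᵥ* P) j}
  have hU : IsOpen U := by
    simp only [U, Set.ofPred_forall]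
    exact isOpen_iInter_of_finite fun j ↦ isOpen_lt continuous_const
      ((_root_.continuous_apply j).comp (continuous_id.matrix_vecMul continuous_const))
  have hne : U.Nonempty :=
    ⟨(fun _ ↦ 1) ᵥ* P⁻¹, fun j ↦ by simp [vecMul_vecMul, nonsing_inv_mul P hP]⟩
  have hsmul : ∀ t : ℝ, 0 < t → ∀ x ∈ U, t • x ∈ U := fun t ht x hx j ↦ by
    simpa [smul_vecMul] using mul_pos ht (hx j)
  obtain ⟨n, hn⟩ := exists_intCast_mem_of_isOpen_of_smul_mem hU hne hsmul
  have hn0 : n ≠ 0 := by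
    rintro rfl
    simpa [← Pi.zero_def] using hn 0
  obtain ⟨g, hg, m, hm, rfl⟩ := exists_isCoprime_nsmul_eq hn0
  refine ⟨m, hm, show (fun i ↦ (m i : ℝ)) ∈ U from ?_⟩
  convert hsmul (g : ℝ)⁻¹ (by positivity) _ hn using 1
  ext i
  simp [hg.ne']

theorem exists_nat_forall_nonneg_add_mul {K ι : Type*} [Field K] [LinearOrder K]
    [IsStrictOrderedRing K] [Archimedean K] [Finite ι] (a b : ι → K) (ha : ∀ i, 0 < a i) :
    ∃ k : ℕ, ∀ i, 0 ≤ b i + k * a i := by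
  have : ∀ i, ∀ᶠ k : ℕ in atTop, 0 ≤ b i + k * a i := fun i ↦
    (tendsto_atTop_add_const_left _ _
      (tendsto_natCast_atTop_atTop.atTop_mul_const (ha i))).eventually_ge_atTop 0
  exact (eventually_all.2 this).exists

theorem ModularGroup.T_pow_mul_apply_zero (n : ℤ) (g : SL(2, ℤ)) :
    (T ^ n * g) 0 = g 0 + n • g 1 := by
  ext j
  simp [coe_T_zpow, Matrix.vecMul, dotProduct, Fin.sum_univ_succ]

theorem exists_SL2_mul_nonneg (P : Matrix (Fin 2) (Fin 2) ℝ) (hP : IsUnit P.det) :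
    ∃ B : SL(2, ℤ), ∀ i j, 0 ≤ ((B : Matrix (Fin 2) (Fin 2) ℤ).map (Int.cast : ℤ → ℝ) * P) i j := by
  obtain ⟨m, hm, hmP⟩ := exists_isCoprime_vecMul_pos P hP
  obtain ⟨γ, -, hγ⟩ := bottom_row_surj hm
  obtain ⟨k, hk⟩ := exists_nat_forall_nonneg_add_mul _ ((fun i ↦ (γ 0 i : ℝ)) ᵥ* P) hmP
  refine ⟨T ^ (k : ℤ) * γ, fun i j ↦ ?_⟩
  rw [mul_apply_eq_vecMul]
  fin_cases i
  · have hrow : (T ^ (k : ℤ) * γ) 0 = γ 0 + k • m := by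
      rw [T_pow_mul_apply_zero, ← hγ, natCast_zsmul]
    show 0 ≤ ((fun i ↦ (((T ^ (k : ℤ) * γ) 0 i : ℤ) : ℝ)) ᵥ* P) j
    have hsplit : (fun i ↦ (((γ 0 + k • m) i : ℤ) : ℝ)) =
        (fun i ↦ (γ 0 i : ℝ)) + (k : ℝ) • fun i ↦ (m i : ℝ) := by
      ext i
      simp
    rw [hrow, hsplit, add_vecMul, smul_vecMul]
    exact hk j
  · have hrow : (T ^ (k : ℤ) * γ) 1 = m := (T_pow_mul_apply_one _ _).trans hγ
    show 0 ≤ ((fun i ↦ (((T ^ (k : ℤ) * γ) 1 i : ℤ) : ℝ)) ᵥ* P) j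
    rw [hrow]
    exact (hmP j).le

/-- every invertible real 2×2 matrix factors as `P = A * P̃` with
`A ∈ GL₂(ℤ)` and `P̃` invertible with non-negative entries. -/
theorem stmt3 (P : Matrix (Fin 2) (Fin 2) ℝ) (hP : IsUnit P.det) :
    ∃ A : Matrix (Fin 2) (Fin 2) ℤ, (A.det = 1 ∨ A.det = -1) ∧
      ∃ Pt : Matrix (Fin 2) (Fin 2) ℝ, IsUnit Pt.det ∧ (∀ i j, 0 ≤ Pt i j) ∧
        P = (A.map (Int.cast : ℤ → ℝ)) * Pt := by
  obtain ⟨B, hB⟩ := exists_SL2_mul_nonneg P hP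
  have hdetB : ((B : Matrix (Fin 2) (Fin 2) ℤ).map (Int.cast : ℤ → ℝ)).det = 1 := by
    rw [← Int.cast_det, B.det_coe, Int.cast_one]
  have hinv : ((B⁻¹ : SL(2, ℤ)) : Matrix (Fin 2) (Fin 2) ℤ).map (Int.cast : ℤ → ℝ) *
      (B : Matrix (Fin 2) (Fin 2) ℤ).map (Int.cast : ℤ → ℝ) = 1 := by
    calc _ = ((B⁻¹ * B : SL(2, ℤ)) : Matrix (Fin 2) (Fin 2) ℤ).map (Int.castRingHom ℝ) := by
          rw [Matrix.SpecialLinearGroup.coe_mul, Matrix.map_mul]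
          rfl
      _ = 1 := by simp
  refine ⟨(B⁻¹ : SL(2, ℤ)), Or.inl (B⁻¹).det_coe, _, ?_, hB, ?_⟩
  · rwa [det_mul, hdetB, one_mul]
  · rw [← Matrix.mul_assoc, hinv, Matrix.one_mul]
end

section
/- Let P ∈ GL₂(ℝ) and let C = { v ∈ ℝ² : ⟨v, p_u⟩ > 0 and ⟨v, p_s⟩ > 0 }, where p_u, p_s are the columns of P. Then there exist integer vectors b_u, b_s ∈ ℤ² ∩ C with b_u,₁ b_s,₂ − b_u,₂ b_s,₁ = 1. -/
/-!
The cone `C` is open, nonempty (it contains `(1, 1) P⁻¹`) and stable under positive scaling.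
Blowing up a ball inside `C` until its radius exceeds `1/2` shows that `C` contains an integer
point, and dividing it by the gcd of its coordinates makes it primitive, say `b_u`. Bézout
completes `b_u` to a unimodular pair `(b_u, w)`; replacing `w` by `w + n b_u` keeps the
determinant, and for large `n` the point `w + n b_u = n (b_u + w / n)` lies in `C` because
`b_u + w / n → b_u` and `C` is an open cone.
-/

open Filter Topology Matrix

/-- The cone `C`: `(v ᵥ* P) j` is the inner product of `v` with the `j`-th column of `P`. -/
def Matrix.dualCone {m n : Type*} [Fintype m] (P : Matrix m n ℝ) : Set (m → ℝ) :=
  {v | ∀ j, 0 < (v ᵥ* P) j}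

namespace Matrix.dualCone

variable {m n : Type*} [Fintype m]

theorem mem_iff {P : Matrix m n ℝ} {v : m → ℝ} : v ∈ P.dualCone ↔ ∀ j, 0 < (v ᵥ* P) j :=
  Iff.rfl

theorem isOpen [Finite n] (P : Matrix m n ℝ) : IsOpen P.dualCone := by
  simp only [dualCone, Set.ofPred_forall]
  exact isOpen_iInter_of_finite fun j => isOpen_lt continuous_const (by fun_prop)

theorem smul_mem (P : Matrix m n ℝ) {t : ℝ} (ht : 0 < t) {v : m → ℝ} (hv : v ∈ P.dualCone) :
    t • v ∈ P.dualCone := mem_iff.mpr fun j => by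
  rw [smul_vecMul, Pi.smul_apply, smul_eq_mul]
  exact mul_pos ht (hv j)

theorem zero_notMem [Nonempty n] (P : Matrix m n ℝ) : (0 : m → ℝ) ∉ P.dualCone := fun h => by
  simpa using mem_iff.mp h (Classical.arbitrary n)

theorem nonempty [DecidableEq m] (P : Matrix m m ℝ) (hP : IsUnit P.det) : P.dualCone.Nonempty :=
  ⟨(fun _ => 1) ᵥ* P⁻¹, mem_iff.mpr fun j => by simp [vecMul_vecMul, nonsing_inv_mul P hP]⟩

end Matrix.dualCone

theorem exists_int_mem_of_isOpen_of_smul_mem {ι : Type*} [Fintype ι] {S : Set (ι → ℝ)}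
    (hS : IsOpen S) (hne : S.Nonempty) (hcone : ∀ t : ℝ, 0 < t → ∀ x ∈ S, t • x ∈ S) :
    ∃ z : ι → ℤ, ((↑) ∘ z : ι → ℝ) ∈ S := by
  obtain ⟨v, hv⟩ := hne
  obtain ⟨ε, hε, hball⟩ := Metric.isOpen_iff.mp hS v hv
  -- Rounding `ε⁻¹ • v` moves it by at most `1/2` in the sup norm, within the ball
  -- `ε⁻¹ • ball v ε` of radius `1`.
  set z : ι → ℤ := fun i => round (ε⁻¹ * v i)
  have hdist : ‖((↑) ∘ z : ι → ℝ) - ε⁻¹ • v‖ ≤ 1 / 2 :=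
    (pi_norm_le_iff_of_nonneg (by norm_num)).mpr fun i => by
      simpa [Real.norm_eq_abs, abs_sub_comm] using abs_sub_round (ε⁻¹ * v i)
  have hmem : ε • ((↑) ∘ z : ι → ℝ) ∈ S := by
    refine hball ?_
    rw [Metric.mem_ball, dist_eq_norm]
    calc ‖ε • ((↑) ∘ z : ι → ℝ) - v‖ = ε * ‖((↑) ∘ z : ι → ℝ) - ε⁻¹ • v‖ := by
          rw [← norm_smul_of_nonneg hε.le, smul_sub, smul_inv_smul₀ hε.ne']
      _ ≤ ε * (1 / 2) := by gcongr
      _ < ε := by linarith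
  refine ⟨z, ?_⟩
  simpa [smul_smul, hε.ne'] using hcone ε⁻¹ (inv_pos.mpr hε) _ hmem

theorem exists_isCoprime_mem_of_smul_mem {S : Set (Fin 2 → ℝ)}
    (hcone : ∀ t : ℝ, 0 < t → ∀ x ∈ S, t • x ∈ S) {z : Fin 2 → ℤ}
    (hz : ((↑) ∘ z : Fin 2 → ℝ) ∈ S) (hz0 : z ≠ 0) :
    ∃ u : Fin 2 → ℤ, ((↑) ∘ u : Fin 2 → ℝ) ∈ S ∧ IsCoprime (u 0) (u 1) := by
  have hgcd : 0 < Int.gcd (z 0) (z 1) := by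
    refine Int.gcd_pos_iff.mpr (not_and_or.mp fun h => hz0 ?_)
    ext i; fin_cases i <;> simp [h.1, h.2]
  obtain ⟨g, u0, u1, hg, hcop, h0, h1⟩ := Int.exists_gcd_one' hgcd
  refine ⟨![u0, u1], ?_, Int.isCoprime_iff_gcd_eq_one.mpr hcop⟩
  have hzu : ((↑) ∘ z : Fin 2 → ℝ) = (g : ℝ) • ((↑) ∘ ![u0, u1]) := by
    ext i; fin_cases i <;> simp [h0, h1, mul_comm]
  have hg' : (0 : ℝ) < g := by exact_mod_cast hg
  simpa [hzu, smul_smul, hg'.ne'] using hcone (g : ℝ)⁻¹ (inv_pos.mpr hg') _ hz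

theorem eventually_add_nsmul_mem_of_isOpen_of_smul_mem {E : Type*} [AddCommGroup E] [Module ℝ E]
    [TopologicalSpace E] [ContinuousAdd E] [ContinuousSMul ℝ E] {S : Set E} (hS : IsOpen S)
    (hcone : ∀ t : ℝ, 0 < t → ∀ x ∈ S, t • x ∈ S) {u : E} (hu : u ∈ S) (w : E) :
    ∀ᶠ n : ℕ in atTop, w + n • u ∈ S := by
  have hlim : Tendsto (fun n : ℕ => (n : ℝ)⁻¹ • w + u) atTop (𝓝 u) := by
    simpa using ((tendsto_inv_atTop_nhds_zero_nat (𝕜 := ℝ)).smul_const w).add_const u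
  filter_upwards [hlim (hS.mem_nhds hu), eventually_gt_atTop 0] with n hn hpos
  have hn' : (0 : ℝ) < n := by exact_mod_cast hpos
  simpa [smul_add, smul_smul, hn'.ne', Nat.cast_smul_eq_nsmul] using hcone n hn' _ hn

/-- for `P ∈ GL₂(ℝ)` with columns `p_u, p_s`, the open cone
`C = {v : ⟨v,p_u⟩ > 0, ⟨v,p_s⟩ > 0}` contains integer vectors `b_u, b_s`
with determinant `b_u,₁ b_s,₂ − b_u,₂ b_s,₁ = 1`. -/
theorem stmt4 (P : Matrix (Fin 2) (Fin 2) ℝ) (hP : IsUnit P.det) :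
    ∃ bu bs : Fin 2 → ℤ,
      (0 < ∑ i, (bu i : ℝ) * P i 0 ∧ 0 < ∑ i, (bu i : ℝ) * P i 1) ∧
      (0 < ∑ i, (bs i : ℝ) * P i 0 ∧ 0 < ∑ i, (bs i : ℝ) * P i 1) ∧
      bu 0 * bs 1 - bu 1 * bs 0 = 1 := by
  have hcone : ∀ t : ℝ, 0 < t → ∀ x ∈ P.dualCone, t • x ∈ P.dualCone :=
    fun _ ht _ hx => dualCone.smul_mem P ht hx
  obtain ⟨z, hz⟩ := exists_int_mem_of_isOpen_of_smul_mem (dualCone.isOpen P)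
    (dualCone.nonempty P hP) hcone
  have hz0 : z ≠ 0 := by
    rintro rfl
    exact dualCone.zero_notMem P (by simpa using hz)
  obtain ⟨u, hu, a, b, hab⟩ := exists_isCoprime_mem_of_smul_mem hcone hz hz0
  obtain ⟨n, hn⟩ := (eventually_add_nsmul_mem_of_isOpen_of_smul_mem (dualCone.isOpen P)
    hcone hu ((↑) ∘ ![-b, a])).exists
  refine ⟨u, ![-b, a] + n • u, ⟨hu 0, hu 1⟩, ⟨?_, ?_⟩, ?_⟩
  · simpa [vecMul, dotProduct] using dualCone.mem_iff.mp hn 0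
  · simpa [vecMul, dotProduct] using dualCone.mem_iff.mp hn 1
  · simp only [Pi.add_apply, Pi.smul_apply, cons_val_zero, cons_val_one]
    linear_combination hab
end

section
/- Let σ̂ ∈ {(1,1),(−1,−1)} and let {D_c : c ∈ C} be a continuous family of invertible real 2×2 matrices indexed by a compact set C, with D_c(ℝ²_{≥0}) ⊆ R^{σ̂} ∪ {0} for all c ∈ C, where R^{(1,1)} = ℝ²_{>0} and R^{(−1,−1)} = ℝ²_{<0}. Then for any σ ∈ {(1,1),(−1,−1)}, any σ̃ ∈ {(1,−1),(−1,1)}, and any δ, δ̃ ∈ ℝ²_{>0}, there exists q in the translated quadrant R^{σ̃}_{δ̃} = I^{σ̃}(ℝ²_{>0} + δ̃) such that D_c q ∈ R^{σ}_{δ} = I^{σ}(ℝ²_{>0} + δ) for all c ∈ C. -/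
/-!
Up to the sign `s`, every entry of `D_c` is positive: the columns `D_c e_j` are nonzero by
invertibility and lie in `R^σ̂`. By compactness these entries stay uniformly away from `0` and
`∞`, so for `q = t • (x, -y)` the vector `u D_c q = (u t s) (x P_c e₀ - y P_c e₁)`, with
`P_c = s D_c`, lands in `R^σ_δ` for all `c` once one coordinate of `(x, y)` is fixed and the
other is taken large enough, which one depending on the sign `u t s`.
-/

open Filter Matrix

lemma pos_mul_apply_of_isUnit_det {n : Type*} [Fintype n] [DecidableEq n]
    {A : Matrix n n ℝ} (hA : IsUnit A.det) {s : ℝ}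
    (hmap : ∀ v : n → ℝ, (∀ i, 0 ≤ v i) → A *ᵥ v = 0 ∨ ∀ i, 0 < s * (A *ᵥ v) i)
    (i j : n) : 0 < s * A i j := by
  have hej : (0 : n → ℝ) ≤ Pi.single j 1 := Pi.single_nonneg.2 zero_le_one
  rcases hmap (Pi.single j 1) hej with h | h
  · have := congrFun (eq_zero_of_mulVec_eq_zero hA.ne_zero h) j
    simp at this
  · simpa [mulVec_single_one] using h i

lemma eventually_forall_lt_mul {ι : Type*} [TopologicalSpace ι] [CompactSpace ι]
    {a b : ι → ℝ} (ha : Continuous a) (hb : Continuous b) (hpos : ∀ c, 0 < a c) :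
    ∀ᶠ x in atTop, ∀ c, b c < x * a c := by
  have hba : Continuous fun c => b c / a c := hb.div ha fun c => (hpos c).ne'
  obtain ⟨K, hK⟩ := (isCompact_range hba).bddAbove
  filter_upwards [eventually_gt_atTop K] with x hx c
  exact (div_lt_iff₀ (hpos c)).1 ((hK ⟨c, rfl⟩).trans_lt hx)

lemma exists_gt_forall_lt_mul {ι κ : Type*} [TopologicalSpace ι] [CompactSpace ι] [Finite κ]
    {a b : κ → ι → ℝ} (ha : ∀ i, Continuous (a i)) (hb : ∀ i, Continuous (b i))
    (hpos : ∀ i c, 0 < a i c) (x₀ : ℝ) :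
    ∃ x, x₀ < x ∧ ∀ i c, b i c < x * a i c :=
  ((eventually_gt_atTop x₀).and
    (eventually_all.2 fun i => eventually_forall_lt_mul (ha i) (hb i) (hpos i))).exists

lemma exists_forall_lt_sign_mul_sub {ι κ : Type*} [TopologicalSpace ι] [CompactSpace ι]
    [Finite κ] {a b : κ → ι → ℝ} (ha : ∀ i, Continuous (a i))
    (hb : ∀ i, Continuous (b i))
    (ha_pos : ∀ i c, 0 < a i c) (hb_pos : ∀ i c, 0 < b i c)
    {ε : ℝ} (hε : ε = 1 ∨ ε = -1) (δ : κ → ℝ) (x₀ y₀ : ℝ) :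
    ∃ x y, x₀ < x ∧ y₀ < y ∧ ∀ i c, δ i < ε * (x * a i c - y * b i c) := by
  rcases hε with rfl | rfl
  · obtain ⟨x, hx, h⟩ := exists_gt_forall_lt_mul ha
      (b := fun i c => δ i + (y₀ + 1) * b i c)
      (fun i => continuous_const.add (continuous_const.mul (hb i))) ha_pos x₀
    exact ⟨x, y₀ + 1, hx, lt_add_one y₀, fun i c => by linarith [h i c]⟩
  · obtain ⟨y, hy, h⟩ := exists_gt_forall_lt_mul hb
      (b := fun i c => δ i + (x₀ + 1) * a i c)
      (fun i => continuous_const.add (continuous_const.mul (ha i))) hb_pos y₀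
    exact ⟨x₀ + 1, y, lt_add_one x₀, hy, fun i c => by linarith [h i c]⟩

theorem stmt5_general {ι : Type*} [TopologicalSpace ι] [CompactSpace ι]
    (D : ι → Matrix (Fin 2) (Fin 2) ℝ) (hcont : Continuous D)
    (hinv : ∀ c, IsUnit (D c).det)
    (s : ℝ) (hs : s = 1 ∨ s = -1)
    (hmap : ∀ c, ∀ v : Fin 2 → ℝ, (∀ i, 0 ≤ v i) →
      (D c).mulVec v = 0 ∨ ∀ i, 0 < s * (D c).mulVec v i)
    (u : ℝ) (hu : u = 1 ∨ u = -1) (t : ℝ) (ht : t = 1 ∨ t = -1)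
    (δ δt : Fin 2 → ℝ) :
    ∃ q : Fin 2 → ℝ, (δt 0 < t * q 0 ∧ δt 1 < -t * q 1) ∧
      ∀ c, δ 0 < u * (D c).mulVec q 0 ∧ δ 1 < u * (D c).mulVec q 1 := by
  have hpos : ∀ j i c, 0 < s * D c i j := fun j i c =>
    pos_mul_apply_of_isUnit_det (hinv c) (hmap c) i j
  have hentry : ∀ j i, Continuous fun c => s * D c i j := fun j i =>
    continuous_const.mul (hcont.matrix_elem i j)
  have hε : u * t * s = 1 ∨ u * t * s = -1 := by
    rcases hu with rfl | rfl <;> rcases ht with rfl | rfl <;> rcases hs with rfl | rfl <;> norm_num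
  obtain ⟨x, y, hx, hy, hδ⟩ :=
    exists_forall_lt_sign_mul_sub (hentry 0) (hentry 1) (hpos 0) (hpos 1) hε δ (δt 0) (δt 1)
  have ht2 : t * t = 1 := mul_self_eq_one_iff.2 ht
  have hs2 : s * s = 1 := mul_self_eq_one_iff.2 hs
  have hDq : ∀ c i, u * (D c *ᵥ ![t * x, -(t * y)]) i
      = u * t * s * (x * (s * D c i 0) - y * (s * D c i 1)) := fun c i => by
    simp only [mulVec, dotProduct, Fin.sum_univ_two, cons_val_zero, cons_val_one]
    linear_combination (-(u * t * (x * D c i 0 - y * D c i 1))) * hs2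
  refine ⟨![t * x, -(t * y)], ⟨?_, ?_⟩, fun c => ⟨?_, ?_⟩⟩
  · simpa [← mul_assoc, ht2] using hx
  · simpa [← mul_assoc, ht2] using hy
  · simpa only [hDq] using hδ 0 c
  · simpa only [hDq] using hδ 1 c

/-- for a continuous compact family of invertible matrices mapping
the non-negative quadrant into a fixed open diagonal quadrant `R^σ̂ ∪ {0}`
(`σ̂ = (s,s)`, `s = ±1`), and for any diagonal quadrant `σ = (u,u)`,
anti-diagonal quadrant `σ̃ = (t,−t)` and positive translations `δ, δ̃`, there is
`q ∈ R^σ̃_δ̃` with `D_c q ∈ R^σ_δ` for all `c`. -/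
theorem stmt5 {ι : Type*} [TopologicalSpace ι] [CompactSpace ι]
    (D : ι → Matrix (Fin 2) (Fin 2) ℝ) (hcont : Continuous D)
    (hinv : ∀ c, IsUnit (D c).det)
    (s : ℝ) (hs : s = 1 ∨ s = -1)
    (hmap : ∀ c, ∀ v : Fin 2 → ℝ, (∀ i, 0 ≤ v i) →
      (D c).mulVec v = 0 ∨ ∀ i, 0 < s * (D c).mulVec v i)
    (u : ℝ) (hu : u = 1 ∨ u = -1) (t : ℝ) (ht : t = 1 ∨ t = -1)
    (δ δt : Fin 2 → ℝ) (hδ : ∀ i, 0 < δ i) (hδt : ∀ i, 0 < δt i) :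
    ∃ q : Fin 2 → ℝ, (δt 0 < t * q 0 ∧ δt 1 < -t * q 1) ∧
      ∀ c, δ 0 < u * (D c).mulVec q 0 ∧ δ 1 < u * (D c).mulVec q 1 :=
  stmt5_general D hcont hinv s hs hmap u hu t ht δ δt
end

section
/- Every hyperbolic matrix M ∈ GL₂(ℤ) (integer 2×2 matrix with determinant ±1 and no eigenvalue of absolute value 1) is conjugate in GL₂(ℤ) to a matrix of the form ±∏_{i=1}^{n} [[k_i, 1],[1, 0]] with n ≥ 1 and k₁,…,k_n positive integers. -/
/-!
The eigenvalues of `M` are roots of `X² - tX + e` with `e = ±1`; hyperbolicity rules out a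
discriminant `≤ 0` and rational roots (which would be `±1`), so they are real quadratic
irrationals `λ, μ` with `|μ| < 1`, and `M` acts on `ℝ ∪ ∞` by a Möbius map with irrational
fixed points `x, y` (eigenvectors `(x, 1)`, `(y, 1)`).

Conjugating by `!![k, 1; 1, 0]` is a continued-fraction step: it sends the fixed points to
`(x - k)⁻¹, (y - k)⁻¹` and the lower-left entry `c` to `-c (x - k) (y - k)`. With `k = ⌊x⌋`
the new `x` exceeds `1`, and `|c|` strictly drops as long as `x` and `y` have the same integer
part, so finitely many steps reach `x > 1 > y` and two more reach a reduced pair `x > 1`,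
`-1 < y < 0`. For a reduced pair Vieta's formulas give, up to the sign of the matrix,
`0 ≤ d ≤ b ≤ a`, `d ≤ c ≤ a`, `b, c ≥ 1`, and such a matrix is split into factors
`!![k, 1; 1, 0]` by the Euclidean algorithm on its first column.
-/

open Matrix Polynomial

namespace GL2

theorem isRoot_charpoly_map_iff {R : Type*} [CommRing R] [Nontrivial R]
    (M : Matrix (Fin 2) (Fin 2) ℤ) (z : R) :
    (M.map (Int.cast : ℤ → R)).charpoly.IsRoot z ↔ z ^ 2 - M.trace * z + M.det = 0 := by
  rw [show (Int.cast : ℤ → R) = Int.castRingHom R from rfl, charpoly_map, IsRoot, eval_map,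
    ← algebraMap_int_eq, ← aeval_def, charpoly_fin_two]
  simp

theorem det_eq_of_isConj {R n : Type*} [CommRing R] [Fintype n] [DecidableEq n]
    {M A : Matrix n n R} (h : IsConj M A) : A.det = M.det := by
  obtain ⟨u, hu⟩ := h
  rw [← det_units_conj u M, hu.eq, Units.mul_inv_cancel_right]

theorem rat_root_eq_one_or_neg_one {t e : ℤ} (he : IsUnit e) {q : ℚ}
    (hq : q ^ 2 - t * q + e = 0) : q = 1 ∨ q = -1 := by
  have key : q.num ^ 2 = q.den * (t * q.num - e * q.den) := by
    rw [← Rat.num_div_den q] at hq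
    field_simp at hq
    exact_mod_cast (by linear_combination hq : (q.num : ℚ) ^ 2 = q.den * (t * q.num - e * q.den))
  have hden : q.den = 1 := by
    refine (q.reduced.symm.pow_right 2).eq_one_of_dvd ?_
    rw [← Int.natAbs_pow, ← Int.natCast_dvd]
    exact ⟨_, key⟩
  have hnum : IsUnit q.num :=
    isUnit_of_dvd_unit ⟨t - q.num, by rw [hden] at key; push_cast at key; linarith⟩ he
  rw [← Rat.coe_int_num_of_den_eq_one hden]
  rcases Int.isUnit_iff.mp hnum with h | h <;> simp [h]

theorem exists_root_norm_eq_one {t : ℝ} (ht : t ^ 2 ≤ 4) :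
    ∃ z : ℂ, z ^ 2 - t * z + 1 = 0 ∧ ‖z‖ = 1 := by
  obtain ⟨w, hw⟩ : ∃ w : ℝ, w * w = 1 - t ^ 2 / 4 := ⟨_, Real.mul_self_sqrt (by linarith)⟩
  refine ⟨⟨t / 2, w⟩, ?_, ?_⟩
  · apply Complex.ext <;>
      simp only [sq, Complex.add_re, Complex.sub_re, Complex.mul_re, Complex.add_im,
        Complex.sub_im, Complex.mul_im, Complex.ofReal_re, Complex.ofReal_im, Complex.one_re,
        Complex.one_im, Complex.zero_re, Complex.zero_im, zero_mul, sub_zero, add_zero] <;>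
      linarith
  · rw [Complex.norm_def, Complex.normSq_mk, Real.sqrt_eq_one]
    linarith

theorem _root_.Irrational.abs_ne_one {r : ℝ} (h : Irrational r) : |r| ≠ 1 := by
  rw [Ne, abs_eq zero_le_one, not_or]
  exact ⟨h.ne_one, fun h' => h.neg.ne_one (by rw [h', neg_neg])⟩

theorem exists_irrational_roots {t e : ℤ} (he : e = 1 ∨ e = -1)
    (h : ∀ z : ℂ, z ^ 2 - t * z + e = 0 → ‖z‖ ≠ 1) :
    ∃ l m : ℝ, l ^ 2 - t * l + e = 0 ∧ m ^ 2 - t * m + e = 0 ∧ l ≠ m ∧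
      Irrational l ∧ Irrational m ∧ |m| < 1 := by
  have hirr : ∀ r : ℝ, r ^ 2 - t * r + e = 0 → Irrational r := by
    rintro r hr ⟨q, rfl⟩
    refine h q (by exact_mod_cast hr) ?_
    rcases rat_root_eq_one_or_neg_one (Int.isUnit_iff.mpr he) (by exact_mod_cast hr) with
      rfl | rfl <;> simp
  have hD : 0 < (t : ℝ) ^ 2 - 4 * e := by
    by_contra! hD
    obtain rfl : e = 1 := he.resolve_right fun he => by rw [he] at hD; push_cast at hD; nlinarith
    obtain ⟨z, hz, hz1⟩ := exists_root_norm_eq_one (t := t) (by push_cast at hD; linarith)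
    exact h z (by simpa using hz) hz1
  have hs := Real.sq_sqrt hD.le
  have hs0 := Real.sqrt_pos.mpr hD
  set s := √((t : ℝ) ^ 2 - 4 * e)
  have hl : ((t + s) / 2) ^ 2 - t * ((t + s) / 2) + e = 0 := by linear_combination hs / 4
  have hm : ((t - s) / 2) ^ 2 - t * ((t - s) / 2) + e = 0 := by linear_combination hs / 4
  have hprod : |(t + s) / 2| * |(t - s) / 2| = 1 := by
    rw [← abs_mul, show (t + s) / 2 * ((t - s) / 2) = e by linear_combination -hs / 4]
    rcases he with rfl | rfl <;> simp
  have hne : (t + s) / 2 ≠ (t - s) / 2 := by intro h; linarith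
  rcases (hirr _ hm).abs_ne_one.lt_or_gt with hlt | hgt
  · exact ⟨_, _, hl, hm, hne, hirr _ hl, hirr _ hm, hlt⟩
  · refine ⟨_, _, hm, hl, hne.symm, hirr _ hm, hirr _ hl, ?_⟩
    nlinarith [abs_nonneg ((t + s) / 2)]

/-- At a fixed point `x` of the Möbius map `x ↦ (a x + b) / (c x + d)` of `M`, `(x, 1)` is an
eigenvector of `M` with eigenvalue `denom M x = c x + d`. -/
def denom (M : Matrix (Fin 2) (Fin 2) ℤ) (x : ℝ) : ℝ := M 1 0 * x + M 1 1

def IsMobiusFixedPt (M : Matrix (Fin 2) (Fin 2) ℤ) (x : ℝ) : Prop :=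
  M 0 0 * x + M 0 1 = x * denom M x

def gaussConj (k : ℤ) (M : Matrix (Fin 2) (Fin 2) ℤ) : Matrix (Fin 2) (Fin 2) ℤ :=
  !![M 1 0 * k + M 1 1, M 1 0;
    M 0 0 * k + M 0 1 - (M 1 0 * k + M 1 1) * k, M 0 0 - k * M 1 0]

theorem gaussConj_eq_mul (k : ℤ) (M : Matrix (Fin 2) (Fin 2) ℤ) :
    gaussConj k M = !![0, 1; 1, -k] * M * !![k, 1; 1, 0] := by
  conv_rhs => rw [M.eta_fin_two]
  rw [mul_fin_two, mul_fin_two, gaussConj]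
  congr 1
  ring_nf

theorem isConj_gaussConj (k : ℤ) (M : Matrix (Fin 2) (Fin 2) ℤ) : IsConj M (gaussConj k M) := by
  have hinv : !![k, 1; 1, 0] * !![0, 1; 1, -k] = 1 := by simp [Matrix.one_fin_two]
  refine ⟨⟨!![0, 1; 1, -k], !![k, 1; 1, 0], by simp [Matrix.one_fin_two], hinv⟩, ?_⟩
  simp only [SemiconjBy, gaussConj_eq_mul, Matrix.mul_assoc, hinv, Matrix.mul_one]

variable {M : Matrix (Fin 2) (Fin 2) ℤ} {x y : ℝ}

theorem denom_div (hc : M 1 0 ≠ 0) (r : ℝ) : denom M ((r - M 1 1) / M 1 0) = r := by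
  have hc : (M 1 0 : ℝ) ≠ 0 := by exact_mod_cast hc
  rw [denom]
  field_simp
  ring

theorem isMobiusFixedPt_div (hc : M 1 0 ≠ 0) {r : ℝ} (hr : r ^ 2 - M.trace * r + M.det = 0) :
    IsMobiusFixedPt M ((r - M 1 1) / M 1 0) := by
  rw [IsMobiusFixedPt, denom_div hc]
  rw [trace_fin_two, det_fin_two] at hr
  have hc : (M 1 0 : ℝ) ≠ 0 := by exact_mod_cast hc
  field_simp
  push_cast at hr
  linear_combination -hr

theorem IsMobiusFixedPt.neg (hx : IsMobiusFixedPt M x) : IsMobiusFixedPt (-M) x := by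
  unfold IsMobiusFixedPt denom at *
  simp only [neg_apply, Int.cast_neg]
  linear_combination -hx

theorem IsMobiusFixedPt.gaussConj (hx : IsMobiusFixedPt M x) {k : ℤ} (hxk : x ≠ k) :
    IsMobiusFixedPt (GL2.gaussConj k M) (x - k)⁻¹ ∧
      denom (GL2.gaussConj k M) (x - k)⁻¹ = denom M x := by
  have hxk' : x - k ≠ 0 := sub_ne_zero.mpr hxk
  unfold IsMobiusFixedPt at *
  have hden : denom (GL2.gaussConj k M) (x - k)⁻¹ = denom M x := by
    simp only [denom, GL2.gaussConj, of_apply, cons_val', cons_val_zero, cons_val_one,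
      empty_val', cons_val_fin_one] at hx ⊢
    field_simp
    push_cast
    linear_combination hx
  refine ⟨?_, hden⟩
  rw [hden]
  simp only [denom, GL2.gaussConj, of_apply, cons_val', cons_val_zero, cons_val_one,
    empty_val', cons_val_fin_one]
  field_simp
  push_cast
  ring

theorem IsMobiusFixedPt.vieta (hx : IsMobiusFixedPt M x) (hy : IsMobiusFixedPt M y)
    (hxy : x ≠ y) : M 1 0 * (x + y) = M 0 0 - M 1 1 ∧ M 1 0 * x * y = -M 0 1 := by
  unfold IsMobiusFixedPt denom at hx hy
  have h := sub_ne_zero.mpr hxy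
  constructor
  · exact mul_right_cancel₀ h (by linear_combination hy - hx)
  · exact mul_right_cancel₀ h (by linear_combination x * hy - y * hx)

structure IsFixedPointPair (M : Matrix (Fin 2) (Fin 2) ℤ) (x y : ℝ) : Prop where
  isFixedPt_left : IsMobiusFixedPt M x
  isFixedPt_right : IsMobiusFixedPt M y
  irrational_left : Irrational x
  irrational_right : Irrational y
  ne : x ≠ y
  lowerLeft_ne_zero : M 1 0 ≠ 0
  abs_denom_lt_one : |denom M y| < 1

theorem exists_isFixedPointPair (hdet : M.det = 1 ∨ M.det = -1)
    (hhyp : ∀ z : ℂ, z ^ 2 - M.trace * z + M.det = 0 → ‖z‖ ≠ 1) :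
    ∃ x y, IsFixedPointPair M x y := by
  obtain ⟨l, m, hl, hm, hlm, hli, hmi, hm1⟩ := exists_irrational_roots hdet hhyp
  have hc : M 1 0 ≠ 0 := by
    intro hc
    have : (l - M 0 0) * (l - M 1 1) = 0 := by
      rw [trace_fin_two, det_fin_two, hc] at hl
      push_cast at hl
      linear_combination hl
    rcases mul_eq_zero.mp this with h | h
    · exact hli.ne_int (M 0 0) (by linarith)
    · exact hli.ne_int (M 1 1) (by linarith)
  refine ⟨(l - M 1 1) / M 1 0, (m - M 1 1) / M 1 0, isMobiusFixedPt_div hc hl,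
    isMobiusFixedPt_div hc hm, (hli.sub_intCast _).div_intCast hc,
    (hmi.sub_intCast _).div_intCast hc, ?_, hc, by rwa [denom_div hc]⟩
  have hc : (M 1 0 : ℝ) ≠ 0 := by exact_mod_cast hc
  rwa [Ne, div_left_inj' hc, sub_left_inj]

namespace IsFixedPointPair

variable (h : IsFixedPointPair M x y)
include h

theorem neg : IsFixedPointPair (-M) x y :=
  ⟨h.isFixedPt_left.neg, h.isFixedPt_right.neg, h.irrational_left, h.irrational_right, h.ne,
    by simpa using h.lowerLeft_ne_zero, by
      simpa only [denom, neg_apply, Int.cast_neg, neg_mul, ← neg_add, abs_neg] using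
        h.abs_denom_lt_one⟩

theorem gaussConj_lowerLeft (k : ℤ) :
    (GL2.gaussConj k M 1 0 : ℝ) = -M 1 0 * (x - k) * (y - k) := by
  obtain ⟨hsum, hprod⟩ := h.isFixedPt_left.vieta h.isFixedPt_right h.ne
  simp only [GL2.gaussConj, of_apply, cons_val', cons_val_zero, cons_val_one, empty_val',
    cons_val_fin_one]
  push_cast
  linear_combination -k * hsum + hprod

theorem gaussConj (k : ℤ) : IsFixedPointPair (GL2.gaussConj k M) (x - k)⁻¹ (y - k)⁻¹ := by
  have hx := h.irrational_left.ne_int k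
  have hy := h.irrational_right.ne_int k
  obtain ⟨hx', -⟩ := h.isFixedPt_left.gaussConj hx
  obtain ⟨hy', hdy⟩ := h.isFixedPt_right.gaussConj hy
  refine ⟨hx', hy', (h.irrational_left.sub_intCast k).inv, (h.irrational_right.sub_intCast k).inv,
    by simpa [sub_eq_iff_eq_add] using h.ne, ?_, hdy ▸ h.abs_denom_lt_one⟩
  have hc : (M 1 0 : ℝ) ≠ 0 := by exact_mod_cast h.lowerLeft_ne_zero
  have : (GL2.gaussConj k M 1 0 : ℝ) ≠ 0 := by
    rw [h.gaussConj_lowerLeft k]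
    exact mul_ne_zero (mul_ne_zero (neg_ne_zero.mpr hc) (sub_ne_zero.mpr hx)) (sub_ne_zero.mpr hy)
  exact_mod_cast this

theorem natAbs_gaussConj_lowerLeft_lt {k : ℤ} (hx : 0 < x - k) (hx1 : x - k < 1)
    (hy : 0 < y - k) (hy1 : y - k < 1) : (GL2.gaussConj k M 1 0).natAbs < (M 1 0).natAbs := by
  have hc : 0 < |(M 1 0 : ℝ)| := abs_pos.mpr (by exact_mod_cast h.lowerLeft_ne_zero)
  have hlt : |(GL2.gaussConj k M 1 0 : ℝ)| < |(M 1 0 : ℝ)| := by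
    rw [h.gaussConj_lowerLeft, abs_mul, abs_mul, abs_neg, abs_of_pos hx, abs_of_pos hy]
    have : (x - k) * (y - k) < 1 := by nlinarith
    nlinarith
  zify
  exact_mod_cast hlt

end IsFixedPointPair

theorem one_lt_inv_sub_floor {x : ℝ} (hx : Irrational x) : 1 < (x - ⌊x⌋)⁻¹ :=
  one_lt_inv_iff₀.2 ⟨Int.fract_pos.2 (hx.ne_int _), Int.fract_lt_one x⟩

theorem inv_sub_floor_neg {x y : ℝ} (hx : 1 < x) (hy : y < 1) : (y - ⌊x⌋)⁻¹ < 0 := by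
  have : (1 : ℝ) ≤ ⌊x⌋ := by exact_mod_cast Int.le_floor.mpr (by exact_mod_cast hx.le)
  exact inv_lt_zero.mpr (by linarith)

theorem neg_one_lt_inv_sub_floor {x y : ℝ} (hx : 1 < x) (hy : y < 0) : -1 < (y - ⌊x⌋)⁻¹ := by
  have : (1 : ℝ) ≤ ⌊x⌋ := by exact_mod_cast Int.le_floor.mpr (by exact_mod_cast hx.le)
  have := inv_lt_one_of_one_lt₀ (by linarith : 1 < -(y - ⌊x⌋))
  rw [inv_neg] at this
  linarith

theorem IsFixedPointPair.exists_isConj_lt_one (h : IsFixedPointPair M x y) :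
    ∃ N x' y', IsConj M N ∧ IsFixedPointPair N x' y' ∧ 1 < x' ∧ y' < 1 := by
  induction hn : (M 1 0).natAbs using Nat.strong_induction_on generalizing M x y with
  | _ n ih =>
  set k := ⌊x⌋
  have hx₁ := one_lt_inv_sub_floor h.irrational_left
  by_cases hy₁ : (y - k)⁻¹ < 1
  · exact ⟨_, _, _, isConj_gaussConj k M, h.gaussConj k, hx₁, hy₁⟩
  obtain ⟨hy0, hy1⟩ := one_le_inv_iff₀.mp (not_lt.mp hy₁)
  replace hy1 : y - k < 1 := hy1.lt_of_ne fun h' =>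
    h.irrational_right.ne_int (k + 1) (by push_cast; linarith)
  obtain ⟨hx0, hx1⟩ := one_lt_inv_iff₀.mp hx₁
  obtain ⟨N, x', y', hN, h'⟩ :=
    ih _ (hn ▸ h.natAbs_gaussConj_lowerLeft_lt hx0 hx1 hy0 hy1) (h.gaussConj k) rfl
  exact ⟨N, x', y', (isConj_gaussConj k M).trans hN, h'⟩

theorem IsFixedPointPair.exists_isConj_reduced (h : IsFixedPointPair M x y) :
    ∃ N x' y', IsConj M N ∧ IsFixedPointPair N x' y' ∧ 1 < x' ∧ -1 < y' ∧ y' < 0 := by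
  obtain ⟨N, x₁, y₁, hMN, h₁, hx₁, hy₁⟩ := h.exists_isConj_lt_one
  have hy₂ := inv_sub_floor_neg hx₁ hy₁
  have h₂ := h₁.gaussConj ⌊x₁⌋
  have hx₂ := one_lt_inv_sub_floor h₁.irrational_left
  refine ⟨_, _, _, ((hMN.trans (isConj_gaussConj _ _)).trans (isConj_gaussConj _ _)),
    h₂.gaussConj ⌊(x₁ - ⌊x₁⌋)⁻¹⌋, one_lt_inv_sub_floor h₂.irrational_left,
    neg_one_lt_inv_sub_floor hx₂ hy₂, inv_sub_floor_neg hx₂ (by linarith)⟩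

def IsCFProduct (A : Matrix (Fin 2) (Fin 2) ℤ) : Prop :=
  ∃ n, 1 ≤ n ∧ ∃ k : Fin n → ℤ, (∀ i, 1 ≤ k i) ∧
    A = (List.ofFn fun i => !![k i, 1; 1, 0]).prod

theorem isCFProduct_gen {k : ℤ} (hk : 1 ≤ k) : IsCFProduct !![k, 1; 1, 0] :=
  ⟨1, le_rfl, fun _ => k, fun _ => hk, by simp⟩

theorem IsCFProduct.gen_mul {k : ℤ} (hk : 1 ≤ k) {A : Matrix (Fin 2) (Fin 2) ℤ}
    (hA : IsCFProduct A) : IsCFProduct (!![k, 1; 1, 0] * A) := by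
  obtain ⟨n, -, ks, hks, rfl⟩ := hA
  refine ⟨n + 1, by omega, Fin.cons k ks, Fin.cases hk hks, ?_⟩
  simp [List.ofFn_succ]

theorem isCFProduct_of_le {a b c d : ℤ} (hdet : a * d - b * c = 1 ∨ a * d - b * c = -1)
    (hb : 1 ≤ b) (hc : 1 ≤ c) (hd : 0 ≤ d) (hba : b ≤ a) (hca : c ≤ a) (hdb : d ≤ b)
    (hdc : d ≤ c) : IsCFProduct !![a, b; c, d] := by
  induction hn : a.toNat using Nat.strong_induction_on generalizing a b c d with
  | _ n ih =>
  rcases hd.eq_or_lt with rfl | hd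
  · obtain ⟨rfl, rfl⟩ : b = 1 ∧ c = 1 := by
      have : b * c = 1 := by rcases hdet with h | h <;> nlinarith
      exact ⟨Int.eq_one_of_mul_eq_one_right (by linarith) this,
        Int.eq_one_of_mul_eq_one_left (by linarith) this⟩
    exact isCFProduct_gen (by linarith)
  have hca : c < a := by
    refine hca.lt_of_ne ?_
    rintro rfl
    have h1 : c * (b - d) = 1 := by rcases hdet with h | h <;> nlinarith
    obtain rfl := Int.eq_one_of_mul_eq_one_right (by linarith) h1
    linarith
  -- `(a - 1) / c` rather than `a / c`, so that the remainder `a - k c` lies in `[1, c]`.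
  set k := (a - 1) / c
  have hk₁ : c * k ≤ a - 1 := Int.mul_ediv_self_le (by omega)
  have hk₂ : a - 1 < c * k + c := by
    have := Int.lt_mul_ediv_self_add (x := a - 1) (by omega : 0 < c); linarith
  have hk : 1 ≤ k := by nlinarith
  have hfac : !![a, b; c, d] = !![k, 1; 1, 0] * !![c, d; a - k * c, b - k * d] := by simp
  have hdet' :
      c * (b - k * d) - d * (a - k * c) = 1 ∨ c * (b - k * d) - d * (a - k * c) = -1 := by
    rcases hdet with h | h <;> [right; left] <;> linarith
  rw [hfac]
  refine (ih c.toNat (by omega) hdet' hd ?_ ?_ hdc ?_ ?_ ?_ rfl).gen_mul hk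
  all_goals rcases hdet with h | h <;> nlinarith

theorem IsFixedPointPair.isCFProduct (h : IsFixedPointPair M x y) (hdet : M.det = 1 ∨ M.det = -1)
    (hx : 1 < x) (hy : -1 < y) (hy0 : y < 0) (hc : 0 < M 1 0) : IsCFProduct M := by
  obtain ⟨hsum, hprod⟩ := h.isFixedPt_left.vieta h.isFixedPt_right h.ne
  obtain ⟨hμ₁, hμ₂⟩ := abs_lt.mp h.abs_denom_lt_one
  unfold denom at hμ₁ hμ₂
  have hc' : (0 : ℝ) < M 1 0 := by exact_mod_cast hc
  have hcx : 0 < (M 1 0 : ℝ) * x := by positivity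
  have hcy : (M 1 0 : ℝ) * y < 0 := mul_neg_of_pos_of_neg hc' hy0
  have le_of_lt_add_one : ∀ m n : ℤ, (m : ℝ) < n + 1 → m ≤ n := fun m n hmn =>
    Int.lt_add_one_iff.mp (by exact_mod_cast hmn)
  -- With `μ = c y + d ∈ (-1, 1)`: `b = -c x y`, `d = μ - c y`, `a - b = c x (1 + y) + μ`,
  -- `a - c = c (x - 1) + μ`, `b - d = c y (1 - x) - μ`.
  rw [M.eta_fin_two]
  rw [det_fin_two] at hdet
  refine isCFProduct_of_le hdet (le_of_lt_add_one _ _ ?_) hc (le_of_lt_add_one _ _ ?_)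
    (le_of_lt_add_one _ _ ?_) (le_of_lt_add_one _ _ ?_) (le_of_lt_add_one _ _ ?_)
    (le_of_lt_add_one _ _ ?_) <;> push_cast
  · nlinarith [mul_pos hcx (neg_pos.mpr hy0)]
  · linarith
  · nlinarith [mul_pos hcx (by linarith : 0 < 1 + y)]
  · nlinarith [mul_pos hc' (by linarith : 0 < x - 1)]
  · nlinarith [mul_pos_of_neg_of_neg hcy (by linarith : 1 - x < 0)]
  · nlinarith

end GL2

/-- every hyperbolic matrix in `GL₂(ℤ)` is conjugate in `GL₂(ℤ)` to
`± ∏ᵢ [[kᵢ,1],[1,0]]` with `n ≥ 1` and positive integers `kᵢ`. -/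
theorem stmt8 (M : Matrix (Fin 2) (Fin 2) ℤ) (hdet : M.det = 1 ∨ M.det = -1)
    (hhyp : ∀ z : ℂ, (Matrix.charpoly (M.map (Int.cast : ℤ → ℂ))).IsRoot z →
      ‖z‖ ≠ 1) :
    ∃ n : ℕ, 1 ≤ n ∧ ∃ k : Fin n → ℤ, (∀ i, 1 ≤ k i) ∧ ∃ ε : ℤ, (ε = 1 ∨ ε = -1) ∧
      ∃ Q : Matrix (Fin 2) (Fin 2) ℤ, (Q.det = 1 ∨ Q.det = -1) ∧
        Q * M = (ε • (List.ofFn (fun i : Fin n => !![k i, 1; 1, 0])).prod) * Q := by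
  obtain ⟨x, y, hM⟩ := GL2.exists_isFixedPointPair hdet fun z hz =>
    hhyp z ((GL2.isRoot_charpoly_map_iff M z).mpr hz)
  obtain ⟨A, x', y', hMA, hA, hx, hy, hy0⟩ := hM.exists_isConj_reduced
  have hdetA : A.det = 1 ∨ A.det = -1 := GL2.det_eq_of_isConj hMA ▸ hdet
  obtain ⟨ε, hε, P, ⟨n, hn, k, hk, rfl⟩, rfl⟩ :
      ∃ ε : ℤ, (ε = 1 ∨ ε = -1) ∧ ∃ P, GL2.IsCFProduct P ∧ A = ε • P := by
    rcases hA.lowerLeft_ne_zero.lt_or_gt with hc | hc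
    · have hdetA' : (-A).det = 1 ∨ (-A).det = -1 := by
        rwa [det_neg, Fintype.card_fin, neg_one_sq, one_mul]
      exact ⟨-1, .inr rfl, -A, hA.neg.isCFProduct hdetA' hx hy hy0 (by simpa using hc), by simp⟩
    · exact ⟨1, .inl rfl, A, hA.isCFProduct hdetA hx hy hy0 hc, by simp⟩
  obtain ⟨Q, hQ⟩ := hMA
  exact ⟨n, hn, k, hk, ε, hε, Q,
    Int.isUnit_iff.mp ((Matrix.isUnit_iff_isUnit_det _).mp Q.isUnit), hQ⟩
end

section
/- Let p, q ∈ ℂ with 0 < |p| < 1 and 0 < |q| < 1, and for r ∈ (0,1) let N(r) = #{ (n,m) ∈ ℕ² : n,m ≥ 1, |p|^n |q|^m ≥ r }. Then N(r) = ⌊ℓ_p(r)⌋⌊ℓ_q(r)⌋/2 + δ(r) where ℓ_s(r) = log r / log |s| and |δ(r)| ≤ 1 + ⌊ℓ_p(r)⌋ + ⌊ℓ_q(r)⌋. In particular lim_{r→0} N(r)·(log r)^{-2} = (2 log|p| log|q|)^{-1}. -/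
/-!
Taking logarithms, with `a = -log ‖p‖`, `b = -log ‖q‖` and `L = -log r`, `N(r)` counts the lattice
points `n, m ≥ 1` of the triangle `n a + m b ≤ L`. Its `n`-th column holds `⌊(L - n a) / b⌋`
points for `1 ≤ n ≤ A := ⌊L / a⌋`. Replacing each floor by its argument costs at most one per
column, and summing the arithmetic progression gives, with `B := ⌊L / b⌋`,
`A B / 2 - A - B / 2 ≤ N(r) ≤ A B / 2 + A / 2`. Since `A ~ L / a` and `B ~ L / b`, this also gives
`N(r) / L² → 1 / (2 a b)`.
-/

open Finset Filter Topology

def latticeTriangle (a b L : ℝ) : Set (ℕ × ℕ) :=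
  {nm | 1 ≤ nm.1 ∧ 1 ≤ nm.2 ∧ nm.1 * a + nm.2 * b ≤ L}

section LatticeTriangle

variable {a b L : ℝ}

theorem latticeTriangle_eq_biUnion (ha : 0 < a) (hb : 0 < b) :
    latticeTriangle a b L =
      ↑((Icc 1 ⌊L / a⌋₊).biUnion fun n => {n} ×ˢ Icc 1 ⌊(L - n * a) / b⌋₊) := by
  ext ⟨n, m⟩
  simp only [latticeTriangle, Set.mem_ofPred_eq, coe_biUnion, coe_Icc, Set.mem_Icc, coe_product,
    coe_singleton, Set.mem_iUnion, Set.mem_prod, Set.mem_singleton_iff, exists_prop]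
  constructor
  · rintro ⟨hn, hm, h⟩
    have hna : (n : ℝ) ≤ L / a := by
      rw [le_div_iff₀ ha]; nlinarith [(Nat.cast_nonneg m : (0 : ℝ) ≤ m)]
    refine ⟨n, ⟨hn, (Nat.le_floor_iff' (by omega)).2 hna⟩, rfl, hm, ?_⟩
    rw [Nat.le_floor_iff' (by omega), le_div_iff₀ hb]
    linarith
  · rintro ⟨n, ⟨hn, -⟩, rfl, hm, hmL⟩
    rw [Nat.le_floor_iff' (by omega), le_div_iff₀ hb] at hmL
    exact ⟨hn, hm, by linarith⟩

theorem ncard_latticeTriangle (ha : 0 < a) (hb : 0 < b) :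
    (latticeTriangle a b L).ncard = ∑ n ∈ Icc 1 ⌊L / a⌋₊, ⌊(L - n * a) / b⌋₊ := by
  rw [latticeTriangle_eq_biUnion ha hb, Set.ncard_coe_finset, card_biUnion]
  · simp
  · intro n _ n' _ hne
    exact disjoint_product.2 (Or.inl (disjoint_singleton.2 hne))

theorem sum_Icc_natCast (k : ℕ) : ∑ n ∈ Icc 1 k, (n : ℝ) = k * (k + 1) / 2 := by
  induction k with
  | zero => simp
  | succ k ih => rw [sum_Icc_succ_top (by omega), ih]; push_cast; ring

theorem sum_Icc_sub_mul_div (k : ℕ) :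
    ∑ n ∈ Icc 1 k, (L - n * a) / b = (k * L - a * (k * (k + 1) / 2)) / b := by
  rw [← sum_div, sum_sub_distrib, ← sum_mul, sum_Icc_natCast]
  simp only [sum_const, Nat.card_Icc, add_tsub_cancel_right, nsmul_eq_mul]
  ring

theorem sum_floor_sub_mul_div_le (ha : 0 < a) (hb : 0 < b) :
    ((∑ n ∈ Icc 1 ⌊L / a⌋₊, ⌊(L - n * a) / b⌋₊ : ℕ) : ℝ) ≤
      ⌊L / a⌋₊ * ⌊L / b⌋₊ / 2 + ⌊L / a⌋₊ / 2 := by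
  set A := ⌊L / a⌋₊
  have hfloor : ((∑ n ∈ Icc 1 A, ⌊(L - n * a) / b⌋₊ : ℕ) : ℝ) ≤
      ∑ n ∈ Icc 1 A, (L - n * a) / b := by
    push_cast
    refine sum_le_sum fun n hn => Nat.floor_le (div_nonneg ?_ hb.le)
    have := (Nat.le_floor_iff' (Nat.one_le_iff_ne_zero.1 (mem_Icc.1 hn).1)).1 (mem_Icc.1 hn).2
    rw [le_div_iff₀ ha] at this
    linarith
  have hA : L < (A + 1) * a := by
    have := Nat.lt_floor_add_one (L / a); rwa [div_lt_iff₀ ha] at this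
  have hB : L / b < ⌊L / b⌋₊ + 1 := Nat.lt_floor_add_one _
  rw [sum_Icc_sub_mul_div] at hfloor
  refine hfloor.trans ?_
  calc (A * L - a * (A * (A + 1) / 2)) / b ≤ A / 2 * (L / b) := by
        rw [div_le_iff₀ hb]
        field_simp
        nlinarith [(Nat.cast_nonneg A : (0 : ℝ) ≤ A)]
    _ ≤ A / 2 * (⌊L / b⌋₊ + 1) := by gcongr
    _ = _ := by ring

theorem le_sum_floor_sub_mul_div (ha : 0 < a) (hb : 0 < b) (hL : 0 ≤ L) :
    ⌊L / a⌋₊ * ⌊L / b⌋₊ / 2 - ⌊L / a⌋₊ - ⌊L / b⌋₊ / 2 ≤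
      ((∑ n ∈ Icc 1 ⌊L / a⌋₊, ⌊(L - n * a) / b⌋₊ : ℕ) : ℝ) := by
  set A := ⌊L / a⌋₊
  set B := ⌊L / b⌋₊
  have hfloor : ∑ n ∈ Icc 1 A, ((L - n * a) / b - 1) ≤
      ((∑ n ∈ Icc 1 A, ⌊(L - n * a) / b⌋₊ : ℕ) : ℝ) := by
    push_cast
    exact sum_le_sum fun n _ => (Nat.sub_one_lt_floor _).le
  rw [sum_sub_distrib, sum_Icc_sub_mul_div] at hfloor
  simp only [sum_const, Nat.card_Icc, add_tsub_cancel_right, nsmul_eq_mul, mul_one] at hfloor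
  have hA : A * a ≤ L := by
    have := Nat.floor_le (div_nonneg hL ha.le); rwa [le_div_iff₀ ha] at this
  have hB : (B : ℝ) ≤ L / b := Nat.floor_le (div_nonneg hL hb.le)
  refine le_trans ?_ hfloor
  rcases Nat.eq_zero_or_pos A with hA0 | hA1
  · rw [hA0]
    norm_num
    positivity
  · have hA1 : (1 : ℝ) ≤ A := by exact_mod_cast hA1
    calc (A * B / 2 - A - B / 2 : ℝ) = (A - 1) / 2 * B - A := by ring
      _ ≤ (A - 1) / 2 * (L / b) - A := by gcongr
      _ ≤ (A * L - a * (A * (A + 1) / 2)) / b - A := by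
        gcongr
        rw [le_div_iff₀ hb]
        field_simp
        nlinarith

theorem abs_ncard_latticeTriangle_sub_le (ha : 0 < a) (hb : 0 < b) (hL : 0 ≤ L) :
    |((latticeTriangle a b L).ncard : ℝ) - ⌊L / a⌋₊ * ⌊L / b⌋₊ / 2| ≤
      ⌊L / a⌋₊ + ⌊L / b⌋₊ / 2 := by
  rw [ncard_latticeTriangle ha hb, abs_le]
  constructor <;>
    linarith [sum_floor_sub_mul_div_le (L := L) ha hb, le_sum_floor_sub_mul_div ha hb hL,
      (Nat.cast_nonneg ⌊L / a⌋₊ : (0 : ℝ) ≤ _), (Nat.cast_nonneg ⌊L / b⌋₊ : (0 : ℝ) ≤ _)]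

theorem tendsto_natFloor_div_div (ha : 0 < a) :
    Tendsto (fun L => (⌊L / a⌋₊ : ℝ) / L) atTop (𝓝 a⁻¹) := by
  have := (tendsto_nat_floor_div_atTop.comp (tendsto_id.atTop_div_const ha)).mul_const a⁻¹
  rw [one_mul] at this
  refine this.congr fun L => ?_
  simp only [Function.comp_apply, id]
  field_simp

theorem tendsto_ncard_latticeTriangle_div_sq (ha : 0 < a) (hb : 0 < b) :
    Tendsto (fun L => ((latticeTriangle a b L).ncard : ℝ) / L ^ 2) atTop
      (𝓝 (1 / (2 * a * b))) := by
  have hA := tendsto_natFloor_div_div ha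
  have hB := tendsto_natFloor_div_div hb
  have hmain := (hA.mul hB).div_const 2
  have herr : Tendsto (fun L =>
      (((latticeTriangle a b L).ncard : ℝ) - ⌊L / a⌋₊ * ⌊L / b⌋₊ / 2) / L ^ 2) atTop (𝓝 0) := by
    have hbound := (hA.add (hB.div_const 2)).mul tendsto_inv_atTop_zero
    rw [mul_zero] at hbound
    refine squeeze_zero_norm' ?_ hbound
    filter_upwards [eventually_gt_atTop 0] with L hL
    rw [Real.norm_eq_abs, abs_div, abs_of_pos (by positivity : 0 < L ^ 2)]
    calc _ ≤ (⌊L / a⌋₊ + ⌊L / b⌋₊ / 2 : ℝ) / L ^ 2 := by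
          gcongr; exact abs_ncard_latticeTriangle_sub_le ha hb hL.le
      _ = _ := by field_simp
  convert herr.add hmain using 1
  · funext L
    by_cases hL : L = 0
    · simp [hL]
    · field_simp
      ring
  · rw [zero_add]; field_simp

end LatticeTriangle

theorem setOf_le_pow_mul_pow_eq_latticeTriangle {x y r : ℝ} (hx : 0 < x) (hy : 0 < y)
    (hr : 0 < r) :
    {nm : ℕ × ℕ | 1 ≤ nm.1 ∧ 1 ≤ nm.2 ∧ r ≤ x ^ nm.1 * y ^ nm.2} =
      latticeTriangle (-Real.log x) (-Real.log y) (-Real.log r) := by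
  ext nm
  simp only [latticeTriangle, Set.mem_ofPred_eq]
  rw [← Real.log_le_log_iff hr (by positivity), Real.log_mul (by positivity) (by positivity),
    Real.log_pow, Real.log_pow]
  constructor <;> rintro ⟨h1, h2, h⟩ <;> exact ⟨h1, h2, by linarith⟩

theorem tendsto_neg_log_nhdsWithin_Ioo :
    Tendsto (fun r => -Real.log r) (𝓝[Set.Ioo 0 1] 0) atTop :=
  tendsto_neg_atBot_atTop.comp
    (Real.tendsto_log_nhdsGT_zero.mono_left (nhdsWithin_mono 0 Set.Ioo_subset_Ioi_self))

/-- lattice point count `N(r) = #{(n,m) ∈ ℕ², n,m ≥ 1 : |p|ⁿ|q|ᵐ ≥ r}`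
satisfies `N(r) = ⌊ℓ_p(r)⌋⌊ℓ_q(r)⌋/2 + δ(r)` with
`|δ(r)| ≤ 1 + ⌊ℓ_p(r)⌋ + ⌊ℓ_q(r)⌋`, and `N(r)(log r)⁻² → (2 log|p| log|q|)⁻¹` as `r → 0`. -/
theorem stmt12 (p q : ℂ) (hp0 : 0 < ‖p‖) (hp1 : ‖p‖ < 1)
    (hq0 : 0 < ‖q‖) (hq1 : ‖q‖ < 1) :
    let N : ℝ → ℕ := fun r =>
      Set.ncard {nm : ℕ × ℕ | 1 ≤ nm.1 ∧ 1 ≤ nm.2 ∧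
        r ≤ ‖p‖ ^ nm.1 * ‖q‖ ^ nm.2}
    let ellp : ℝ → ℝ := fun r => Real.log r / Real.log (‖p‖)
    let ellq : ℝ → ℝ := fun r => Real.log r / Real.log (‖q‖)
    (∀ r ∈ Set.Ioo (0 : ℝ) 1, ∃ d : ℝ,
        (N r : ℝ) = (⌊ellp r⌋ : ℝ) * (⌊ellq r⌋ : ℝ) / 2 + d ∧
        |d| ≤ 1 + (⌊ellp r⌋ : ℝ) + (⌊ellq r⌋ : ℝ)) ∧
    Filter.Tendsto (fun r => (N r : ℝ) * ((Real.log r) ^ 2)⁻¹)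
      (nhdsWithin 0 (Set.Ioo (0 : ℝ) 1))
      (nhds (1 / (2 * Real.log (‖p‖) * Real.log (‖q‖)))) := by
  intro N ellp ellq
  set a := -Real.log ‖p‖
  set b := -Real.log ‖q‖
  have ha : 0 < a := neg_pos.2 (Real.log_neg hp0 hp1)
  have hb : 0 < b := neg_pos.2 (Real.log_neg hq0 hq1)
  have hN : ∀ r, 0 < r → N r = (latticeTriangle a b (-Real.log r)).ncard := fun r hr =>
    congrArg Set.ncard (setOf_le_pow_mul_pow_eq_latticeTriangle hp0 hq0 hr)
  refine ⟨fun r hr => ?_, ?_⟩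
  · have hL : 0 ≤ -Real.log r := neg_nonneg.2 (Real.log_nonpos hr.1.le hr.2.le)
    have hellp : (⌊ellp r⌋ : ℝ) = ⌊-Real.log r / a⌋₊ := by
      rw [natCast_floor_eq_intCast_floor (div_nonneg hL ha.le), neg_div_neg_eq]
    have hellq : (⌊ellq r⌋ : ℝ) = ⌊-Real.log r / b⌋₊ := by
      rw [natCast_floor_eq_intCast_floor (div_nonneg hL hb.le), neg_div_neg_eq]
    refine ⟨N r - ⌊ellp r⌋ * ⌊ellq r⌋ / 2, by ring, ?_⟩
    rw [hN r hr.1, hellp, hellq]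
    refine (abs_ncard_latticeTriangle_sub_le ha hb hL).trans ?_
    linarith [(Nat.cast_nonneg ⌊-Real.log r / b⌋₊ : (0 : ℝ) ≤ _)]
  · have hlim : 1 / (2 * Real.log ‖p‖ * Real.log ‖q‖) = 1 / (2 * a * b) := by ring
    rw [hlim]
    refine ((tendsto_ncard_latticeTriangle_div_sq ha hb).comp
      tendsto_neg_log_nhdsWithin_Ioo).congr' ?_
    filter_upwards [self_mem_nhdsWithin] with r hr
    rw [Function.comp_apply, hN r hr.1, neg_sq, div_eq_mul_inv]
end

section
/- Let δ ∈ ℝ², σ ∈ {±1}², P ∈ GL₂(ℝ), and let ℤ^σ_P = ℤ² ∩ (Pᵀ)^{-1}(closure of R^{−σ}), where R^τ = I^τ(ℝ²_{>0}). Then the monomial p_n(z) = z₁^{n₁} z₂^{n₂}, viewed as a holomorphic function on the Reinhardt domain with logarithmic base Λ^σ_{P,δ} = P(I^σ(ℝ²_{>0}+δ)), satisfies sup_{r ∈ Λ^σ_{P,δ}} (2π)^{-2} ∫_{[0,2π]²} |p_n(e^{r+it})|² dt < ∞ if and only if n ∈ ℤ^σ_P, and in that case the supremum equals e^{2⟨n,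 v^σ_{P,δ}⟩} where v^σ_{P,δ} = P I^σ δ. -/
/-!
On the torus through `e^r` the modulus of `p_n` is constant, equal to `e^{⟨n, r⟩}`, so the
`L²`-mean is `e^{2⟨n, r⟩}`. Writing `r = P I^σ (x + δ)` with `x` in the open positive orthant,
`⟨n, r⟩ = ⟨I^σ Pᵀ n, x⟩ + ⟨n, v⟩`. A linear form is bounded above on the open orthant iff all its
coefficients are nonpositive, and then its supremum is `0`, approached as `x → 0`; composing
with the increasing continuous map `s ↦ e^{2s + 2⟨n, v⟩}` gives both claims.
-/

open Matrix Set

lemma Complex.norm_exp_add_mul_I_zpow (r t : ℝ) (m : ℤ) :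
    ‖Complex.exp ((r : ℂ) + (t : ℂ) * Complex.I) ^ m‖ = Real.exp (m * r) := by
  rw [← Complex.exp_int_mul, Complex.norm_exp]
  simp

lemma polytorus_mean_norm_sq_monomial (n : Fin 2 → ℤ) (r : Fin 2 → ℝ) :
    ((2 * Real.pi) ^ 2)⁻¹ * ∫ t1 in (0 : ℝ)..(2 * Real.pi), ∫ t2 in (0 : ℝ)..(2 * Real.pi),
      ‖(Complex.exp ((r 0 : ℂ) + (t1 : ℂ) * Complex.I)) ^ (n 0) *
        (Complex.exp ((r 1 : ℂ) + (t2 : ℂ) * Complex.I)) ^ (n 1)‖ ^ 2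
    = Real.exp (2 * ∑ i, (n i : ℝ) * r i) := by
  have h_integrand : ∀ t1 t2 : ℝ, ‖(Complex.exp ((r 0 : ℂ) + (t1 : ℂ) * Complex.I)) ^ (n 0) *
      (Complex.exp ((r 1 : ℂ) + (t2 : ℂ) * Complex.I)) ^ (n 1)‖ ^ 2
        = Real.exp (2 * ∑ i, (n i : ℝ) * r i) := by
    intro t1 t2
    rw [norm_mul, Complex.norm_exp_add_mul_I_zpow, Complex.norm_exp_add_mul_I_zpow,
      ← Real.exp_add, ← Real.exp_nat_mul, Fin.sum_univ_two]
    ring_nf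
  simp only [h_integrand, intervalIntegral.integral_const, smul_eq_mul, sub_zero]
  field_simp

section PositiveOrthant

variable {ι : Type*} [Fintype ι]

lemma isLUB_image_sum_mul_of_pos {c : ι → ℝ} (hc : ∀ i, c i ≤ 0) :
    IsLUB ((fun x => ∑ i, c i * x i) '' {x : ι → ℝ | ∀ i, 0 < x i}) 0 := by
  refine ⟨?_, fun b hb => ?_⟩
  · rintro _ ⟨x, hx, rfl⟩
    exact Finset.sum_nonpos fun i _ => mul_nonpos_of_nonpos_of_nonneg (hc i) (hx i).le
  · have h_lim : Filter.Tendsto (fun t : ℝ => t * ∑ i, c i) (nhdsWithin 0 (Ioi 0)) (nhds 0) :=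
      ((continuous_mul_const _).tendsto' 0 0 (zero_mul _)).mono_left nhdsWithin_le_nhds
    refine le_of_tendsto h_lim (eventually_mem_nhdsWithin.mono fun t (ht : 0 < t) => hb ?_)
    exact ⟨fun _ => t, fun _ => ht, by simp [Finset.mul_sum, mul_comm]⟩

lemma bddAbove_image_sum_mul_of_pos_iff (c : ι → ℝ) :
    BddAbove ((fun x => ∑ i, c i * x i) '' {x : ι → ℝ | ∀ i, 0 < x i}) ↔ ∀ i, c i ≤ 0 := by
  have := Classical.decEq ι
  constructor
  · rintro ⟨b, hb⟩ i
    by_contra! hci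
    set M : ℝ := 1 + (|b - ∑ j, c j| + 1) / c i
    have hM : 0 < M := by positivity
    have h_mem : ∑ j, c j + c i * (M - 1) ≤ b := by
      refine hb ⟨fun j => if j = i then M else 1, fun j => ?_, ?_⟩
      · dsimp only; split_ifs <;> positivity
      · simp only [mul_ite, mul_one, Finset.sum_ite, Finset.filter_eq', Finset.filter_ne',
          Finset.mem_univ, if_true, Finset.sum_singleton, Finset.sum_erase_eq_sub]
        ring
    have : c i * (M - 1) = |b - ∑ j, c j| + 1 := by
      simp only [M]; field_simp; ring
    linarith [le_abs_self (b - ∑ j, c j)]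
  · exact fun hc => ⟨0, (isLUB_image_sum_mul_of_pos hc).1⟩

end PositiveOrthant

lemma bddAbove_image_exp_affine_iff {a : ℝ} (ha : 0 < a) (b : ℝ) (T : Set ℝ) :
    BddAbove ((fun s => Real.exp (a * s + b)) '' T) ↔ BddAbove T := by
  refine ⟨fun ⟨M, hM⟩ => ⟨(M - b - 1) / a, fun s hs => ?_⟩, fun h => ?_⟩
  · have := (Real.add_one_le_exp (a * s + b)).trans (hM ⟨s, hs, rfl⟩)
    rw [le_div_iff₀ ha]
    linarith
  · exact Monotone.map_bddAbove (fun s t hst => by gcongr) h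

lemma Matrix.dotProduct_mulVec_mul_add {m ι R : Type*} [Fintype m] [Fintype ι] [CommRing R]
    (P : Matrix m ι R) (n : m → R) (σ x δ : ι → R) :
    n ⬝ᵥ (P *ᵥ fun i => σ i * (x i + δ i)) =
      ∑ i, σ i * (Pᵀ *ᵥ n) i * x i + n ⬝ᵥ (P *ᵥ fun i => σ i * δ i) := by
  rw [dotProduct_mulVec, dotProduct_mulVec, ← mulVec_transpose]
  simp only [dotProduct, ← Finset.sum_add_distrib]
  exact Finset.sum_congr rfl fun i _ => by ring

theorem stmt16_general (P : Matrix (Fin 2) (Fin 2) ℝ)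
    (σ : Fin 2 → ℝ) (δ : Fin 2 → ℝ) (n : Fin 2 → ℤ) :
    let Λ : Set (Fin 2 → ℝ) := {y | ∃ x : Fin 2 → ℝ, (∀ i, 0 < x i) ∧
      y = P.mulVec (fun i => σ i * (x i + δ i))}
    let v : Fin 2 → ℝ := P.mulVec (fun i => σ i * δ i)
    let F : (Fin 2 → ℝ) → ℝ := fun r =>
      ((2 * Real.pi) ^ 2)⁻¹ * ∫ t1 in (0 : ℝ)..(2 * Real.pi), ∫ t2 in (0 : ℝ)..(2 * Real.pi),
        ‖(Complex.exp ((r 0 : ℂ) + (t1 : ℂ) * Complex.I)) ^ (n 0) *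
          (Complex.exp ((r 1 : ℂ) + (t2 : ℂ) * Complex.I)) ^ (n 1)‖ ^ 2
    (BddAbove (F '' Λ) ↔
        (∀ i, σ i * (P.transpose.mulVec (fun j => ((n j : ℝ)))) i ≤ 0)) ∧
    ((∀ i, σ i * (P.transpose.mulVec (fun j => ((n j : ℝ)))) i ≤ 0) →
        sSup (F '' Λ) = Real.exp (2 * ∑ i, (n i : ℝ) * v i)) := by
  intro Λ v F
  set c : Fin 2 → ℝ := fun i => σ i * (Pᵀ *ᵥ fun j => (n j : ℝ)) i
  set T := (fun x => ∑ i, c i * x i) '' {x : Fin 2 → ℝ | ∀ i, 0 < x i}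
  set g : ℝ → ℝ := fun s => Real.exp (2 * s + 2 * ∑ i, (n i : ℝ) * v i)
  have hΛ : Λ = (fun x : Fin 2 → ℝ => P *ᵥ fun i => σ i * (x i + δ i)) '' {x | ∀ i, 0 < x i} := by
    ext y
    simp only [Λ, mem_ofPred_eq, mem_image, eq_comm]
  have hFΛ : F '' Λ = g '' T := by
    rw [hΛ, image_image, image_image]
    refine image_congr fun x _ => (polytorus_mean_norm_sq_monomial n _).trans ?_
    change Real.exp (2 * ((fun j => (n j : ℝ)) ⬝ᵥ _)) = _
    rw [Matrix.dotProduct_mulVec_mul_add]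
    simp only [g, c, v, dotProduct, mul_add]
  have hg : Monotone g := fun s t hst => Real.exp_le_exp.2 (by linarith)
  refine ⟨by rw [hFΛ, bddAbove_image_exp_affine_iff two_pos, bddAbove_image_sum_mul_of_pos_iff],
    fun hc => ?_⟩
  have hT := isLUB_image_sum_mul_of_pos hc
  have hT_ne : T.Nonempty := ⟨_, _, fun _ => one_pos, rfl⟩
  rw [hFΛ, ← hg.map_csSup_of_continuousAt (by fun_prop) hT_ne hT.bddAbove, hT.csSup_eq hT_ne]
  simp [g]

/-- the monomial `p_n` has uniformly bounded polytorus `L²`-means over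
the logarithmic base `Λ^σ_{P,δ}` iff `n ∈ ℤ^σ_P = ℤ² ∩ (Pᵀ)⁻¹(cl R^{−σ})`, and then
the supremum is `e^{2⟨n, v^σ_{P,δ}⟩}` with `v^σ_{P,δ} = P I^σ δ`. -/
theorem stmt16 (P : Matrix (Fin 2) (Fin 2) ℝ) (hP : IsUnit P.det)
    (σ : Fin 2 → ℝ) (hσ : ∀ i, σ i = 1 ∨ σ i = -1) (δ : Fin 2 → ℝ) (n : Fin 2 → ℤ) :
    let Λ : Set (Fin 2 → ℝ) := {y | ∃ x : Fin 2 → ℝ, (∀ i, 0 < x i) ∧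
      y = P.mulVec (fun i => σ i * (x i + δ i))}
    let v : Fin 2 → ℝ := P.mulVec (fun i => σ i * δ i)
    let F : (Fin 2 → ℝ) → ℝ := fun r =>
      ((2 * Real.pi) ^ 2)⁻¹ * ∫ t1 in (0 : ℝ)..(2 * Real.pi), ∫ t2 in (0 : ℝ)..(2 * Real.pi),
        ‖(Complex.exp ((r 0 : ℂ) + (t1 : ℂ) * Complex.I)) ^ (n 0) *
          (Complex.exp ((r 1 : ℂ) + (t2 : ℂ) * Complex.I)) ^ (n 1)‖ ^ 2
    (BddAbove (F '' Λ) ↔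
        (∀ i, σ i * (P.transpose.mulVec (fun j => ((n j : ℝ)))) i ≤ 0)) ∧
    ((∀ i, σ i * (P.transpose.mulVec (fun j => ((n j : ℝ)))) i ≤ 0) →
        sSup (F '' Λ) = Real.exp (2 * ∑ i, (n i : ℝ) * v i)) :=
  stmt16_general P σ δ n
end
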